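/- Let C₀(Q) ⊆ A be a central non-degenerate inclusion. If the set Q^unif_simple = {q ∈ Q : A/J^unif_q is simple} is non-empty and ⋂_{q ∈ Q^unif_simple} J^unif_q = {0}, then the inclusion C₀(Q) ⊆ A is essential. -/

import Mathlib

open scoped ComplexOrder
open ZeroAtInfty

/-- The smallest closed two-sided ideal of `A` containing `S` (as a set): the intersection of
all closed two-sided ideals containing `S`. -/
def closedIdealGenBy {A : Type*} [NonUnitalCStarAlgebra A] (S : Set A) : Set A :=
  ⋂₀ {L : Set A | (∃ I : TwoSidedIdeal A, (I : Set A) = L) ∧ IsClosed L ∧ S ⊆ L}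

/-- `J^unif_q`: the closed two-sided ideal of `A` generated by
`C_{0,q}(Q) = {f ∈ C₀(Q) : f q = 0}` (viewed in `A` via the inclusion `ι`). -/
def Junif {Q : Type*} [TopologicalSpace Q] [LocallyCompactSpace Q] [T2Space Q]
    {A : Type*} [NonUnitalCStarAlgebra A] (ι : C₀(Q, ℂ) →⋆ₙₐ[ℂ] A) (q : Q) : Set A :=
  closedIdealGenBy {a : A | ∃ f : C₀(Q, ℂ), f q = 0 ∧ a = ι f}

/-- `A / J` is a simple C*-algebra, encoded via the correspondence between closed two-sided
ideals of `A / J` and closed two-sided ideals of `A` containing `J`: `J` is proper and the only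
closed two-sided ideals of `A` containing `J` are `J` itself and `A`. -/
def QuotientSimpleBy {A : Type*} [NonUnitalCStarAlgebra A] (J : Set A) : Prop :=
  J ≠ Set.univ ∧ ∀ L : TwoSidedIdeal A, IsClosed (L : Set A) → J ⊆ (L : Set A) →
    (L : Set A) = J ∨ (L : Set A) = Set.univ

/-- The inclusion `Bs ⊆ A` is essential. -/
def EssentialIncl {A : Type*} [NonUnitalCStarAlgebra A] (Bs : Set A) : Prop :=
  ∀ L : TwoSidedIdeal A, IsClosed (L : Set A) → (L : Set A) ≠ Set.univ →
    Bs ∩ (L : Set A) = {0} → (L : Set A) = {0}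

/-! Let `L` be a proper closed ideal with `ι(C₀(Q)) ∩ L = 0` and let `A / J^unif_q` be simple.
Then the closure of `L + J^unif_q` is `J^unif_q` or `A`. In the second case approximate a bump
function at `q` by `l + j`; elements of `J^unif_q` become small when multiplied by functions
supported close enough to `q`, so for a bump `h` supported there `b = ι h` satisfies
`‖b - b l‖ < 1`. Then `ι g ∈ L` for every `g` with `g h = g`, in particular for one with
`g q = 1`, a contradiction. Hence `L ⊆ ⋂ J^unif_q = 0`. -/

open Filter Topology

namespace TwoSidedIdeal

section TopologicalRing

variable {R : Type*} [NonUnitalRing R] [TopologicalSpace R] [IsTopologicalRing R]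

def topologicalClosure (I : TwoSidedIdeal R) : TwoSidedIdeal R :=
  .mk' (closure I) (subset_closure I.zero_mem)
    (fun hx hy => map_mem_closure₂ continuous_add hx hy fun _ ha _ hb => I.add_mem ha hb)
    (fun hx => map_mem_closure continuous_neg hx fun _ ha => I.neg_mem ha)
    (fun {x _} hy => map_mem_closure (continuous_const_mul x) hy fun _ ha =>
      I.mul_mem_left _ _ ha)
    (fun {_ y} hx => map_mem_closure (f := (· * y)) (continuous_mul_const y) hx fun _ ha =>
      I.mul_mem_right _ _ ha)

@[simp]
lemma coe_topologicalClosure (I : TwoSidedIdeal R) :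
    (I.topologicalClosure : Set R) = closure I := by
  simp [topologicalClosure]

end TopologicalRing

section NormedRing

variable {R : Type*} [NonUnitalNormedRing R]

/-- The iterates of `y ↦ y * (b - m)` starting at `c` lie in `c + L` and tend to `0`. -/
lemma mem_of_mul_eq_self_of_norm_sub_lt_one {L : TwoSidedIdeal R} (hL : IsClosed (L : Set R))
    {b c m : R} (hcb : c * b = c) (hm : m ∈ L) (hbm : ‖b - m‖ < 1) : c ∈ L := by
  set u : ℕ → R := fun n => (· * (b - m))^[n] c
  have hu_succ (n : ℕ) : u (n + 1) = u n * (b - m) := Function.iterate_succ_apply' _ _ _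
  have hu_mem (n : ℕ) : c - u n ∈ L := by
    induction n with
    | zero => simp [u]
    | succ n ih =>
      have hsplit : c - u (n + 1) = c * m + (c - u n) * (b - m) := by
        rw [hu_succ, sub_mul, mul_sub c, hcb]; abel
      rw [hsplit]
      exact L.add_mem (L.mul_mem_left _ _ hm) (L.mul_mem_right _ _ ih)
  have hu_norm (n : ℕ) : ‖u n‖ ≤ ‖c‖ * ‖b - m‖ ^ n := by
    induction n with
    | zero => simp [u]
    | succ n ih =>
      rw [hu_succ, pow_succ, ← mul_assoc]
      exact (norm_mul_le _ _).trans (by gcongr)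
  have hu : Tendsto u atTop (𝓝 0) := squeeze_zero_norm hu_norm <| by
    simpa using (tendsto_pow_atTop_nhds_zero_of_lt_one (norm_nonneg _) hbm).const_mul ‖c‖
  exact hL.mem_of_tendsto (by simpa using tendsto_const_nhds.sub hu) (Eventually.of_forall hu_mem)

def asymptoticAnnihilator {α : Type*} (l : Filter α) (φ : α → R)
    (hφ : ∀ i a, φ i * a = a * φ i) : TwoSidedIdeal R :=
  .mk' {a | Tendsto (fun i => φ i * a) l (𝓝 0)} (by simpa using tendsto_const_nhds)
    (fun ha hb => by simpa [mul_add] using ha.add hb)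
    (fun ha => by simpa using ha.neg)
    (fun {x _} ha => by
      simpa only [Set.mem_ofPred_eq, ← mul_assoc, hφ _ x, mul_zero] using ha.const_mul x)
    (fun {_ y} ha => by simpa [mul_assoc] using ha.mul_const y)

variable {α : Type*} {l : Filter α} {φ : α → R} {hφ : ∀ i a, φ i * a = a * φ i}

lemma mem_asymptoticAnnihilator {a : R} :
    a ∈ asymptoticAnnihilator l φ hφ ↔ Tendsto (fun i => φ i * a) l (𝓝 0) :=
  mem_mk' _ _ _ _ _ _ _

lemma isClosed_asymptoticAnnihilator (hφ₁ : ∀ᶠ i in l, ‖φ i‖ ≤ 1) :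
    IsClosed (asymptoticAnnihilator l φ hφ : Set R) := by
  refine isClosed_of_closure_subset fun a ha => ?_
  rw [SetLike.mem_coe, mem_asymptoticAnnihilator, Metric.tendsto_nhds]
  intro ε hε
  obtain ⟨b, hb, hab⟩ := Metric.mem_closure_iff.1 ha (ε / 2) (half_pos hε)
  rw [SetLike.mem_coe, mem_asymptoticAnnihilator, Metric.tendsto_nhds] at hb
  filter_upwards [hb (ε / 2) (half_pos hε), hφ₁] with i hib hi
  rw [dist_zero_right] at hib ⊢
  rw [dist_eq_norm] at hab
  calc ‖φ i * a‖ ≤ ‖φ i * (a - b)‖ + ‖φ i * b‖ := by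
        simpa [mul_sub] using norm_le_norm_sub_add (φ i * a) (φ i * b)
    _ ≤ ‖a - b‖ + ‖φ i * b‖ := by
        gcongr; exact (norm_mul_le _ _).trans (mul_le_of_le_one_left (norm_nonneg _) hi)
    _ < ε := by linarith

end NormedRing

end TwoSidedIdeal

namespace ZeroAtInftyContinuousMap

variable {X β : Type*} [TopologicalSpace X]

lemma norm_le [SeminormedAddCommGroup β] {f : C₀(X, β)} {C : ℝ} (hC : 0 ≤ C) :
    ‖f‖ ≤ C ↔ ∀ x, ‖f x‖ ≤ C :=
  BoundedContinuousFunction.norm_le (f := f.toBCF) hC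

lemma norm_coe_le_norm [SeminormedAddCommGroup β] (f : C₀(X, β)) (x : X) : ‖f x‖ ≤ ‖f‖ :=
  BoundedContinuousFunction.norm_coe_le_norm f.toBCF x

lemma mul_eq_left_of_support_subset [MulZeroOneClass β] [TopologicalSpace β] [ContinuousMul β]
    {g h : C₀(X, β)} (hgh : Function.support g ⊆ {x | h x = 1}) : g * h = g := by
  ext x
  by_cases hx : g x = 0
  · simp [hx]
  · simp [show h x = 1 from hgh hx]

lemma exists_bump [LocallyCompactSpace X] [T2Space X] {q : X} {W : Set X} (hW : W ∈ 𝓝 q) :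
    ∃ h : C₀(X, ℂ), ‖h‖ ≤ 1 ∧ (∀ᶠ x in 𝓝 q, h x = 1) ∧ Function.support h ⊆ W := by
  obtain ⟨K, hKq, hKW, hK⟩ := local_compact_nhds (interior_mem_nhds.2 hW)
  obtain ⟨φ, hφK, hφc, hφW, hφ01⟩ :=
    exists_continuousMap_one_of_isCompact_subset_isOpen hK isOpen_interior hKW
  have hsupp : HasCompactSupport fun x => (φ x : ℂ) :=
    HasCompactSupport.comp_left (g := ((↑) : ℝ → ℂ)) hφc Complex.ofReal_zero
  let h : C₀(X, ℂ) := ⟨⟨fun x => (φ x : ℂ), by fun_prop⟩, hsupp.is_zero_at_infty⟩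
  have h_apply (x : X) : h x = φ x := rfl
  refine ⟨h, (norm_le zero_le_one).2 fun x => ?_, ?_, fun x hx => ?_⟩
  · rw [h_apply, Complex.norm_real, Real.norm_of_nonneg (hφ01 x).1]
    exact (hφ01 x).2
  · filter_upwards [hKq] with x hx
    rw [h_apply, hφK hx, Pi.one_apply, Complex.ofReal_one]
  · refine interior_subset (hφW (subset_tsupport _ ?_))
    simpa [h_apply] using hx

end ZeroAtInftyContinuousMap

section CStarAlgebra

variable {A : Type*} [NonUnitalCStarAlgebra A]

lemma closedIdealGenBy_subset {S : Set A} {I : TwoSidedIdeal A} (hI : IsClosed (I : Set A))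
    (hS : S ⊆ I) : closedIdealGenBy S ⊆ I :=
  Set.sInter_subset_of_mem ⟨⟨I, rfl⟩, hI, hS⟩

lemma exists_twoSidedIdeal_coe_eq_closedIdealGenBy (S : Set A) :
    ∃ I : TwoSidedIdeal A, (I : Set A) = closedIdealGenBy S := by
  refine ⟨sInf {I | IsClosed (I : Set A) ∧ S ⊆ I}, Set.ext fun x => ?_⟩
  simp [closedIdealGenBy, TwoSidedIdeal.mem_sInf, and_imp]

lemma QuotientSimpleBy.subset_or_dense_sup {J L : TwoSidedIdeal A}
    (hJ : QuotientSimpleBy (J : Set A)) :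
    (L : Set A) ⊆ J ∨ Dense ((L ⊔ J : TwoSidedIdeal A) : Set A) := by
  have hJT : (J : Set A) ⊆ (L ⊔ J).topologicalClosure := by
    rw [TwoSidedIdeal.coe_topologicalClosure]
    exact fun _ hx => subset_closure (TwoSidedIdeal.mem_sup_right hx)
  rcases hJ.2 _ (by simp) hJT with hT | hT
  · refine .inl ?_
    rw [← hT, TwoSidedIdeal.coe_topologicalClosure]
    exact fun _ hx => subset_closure (TwoSidedIdeal.mem_sup_left (J := J) hx)
  · rw [TwoSidedIdeal.coe_topologicalClosure] at hT
    exact .inr (dense_iff_closure_eq.2 hT)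

end CStarAlgebra

section Inclusion

open ZeroAtInftyContinuousMap

variable {Q : Type*} [TopologicalSpace Q] {A : Type*} [NonUnitalCStarAlgebra A]

/-- Functions of norm at most `1` whose supports shrink to `q`. -/
def bumpFilter (q : Q) : Filter C₀(Q, ℂ) :=
  (𝓝 q).smallSets.comap (fun h => Function.support h) ⊓ 𝓟 (Metric.closedBall 0 1)

lemma eventually_bumpFilter_iff {q : Q} {p : C₀(Q, ℂ) → Prop} :
    (∀ᶠ h in bumpFilter q, p h) ↔
      ∃ U ∈ 𝓝 q, ∀ h : C₀(Q, ℂ), Function.support h ⊆ U → ‖h‖ ≤ 1 → p h := by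
  simp only [bumpFilter, eventually_inf_principal, eventually_comap, eventually_smallSets,
    Metric.mem_closedBall, dist_zero_right]
  exact exists_congr fun U => and_congr_right fun _ =>
    ⟨fun H h hU => H _ hU h rfl, fun H _ hU h ht => H h (ht ▸ hU)⟩

variable [LocallyCompactSpace Q] [T2Space Q] {ι : C₀(Q, ℂ) →⋆ₙₐ[ℂ] A}

lemma tendsto_mul_bumpFilter_of_mem_Junif (hι : Isometry ι)
    (hcentral : ∀ f a, ι f * a = a * ι f) {q : Q} {j : A} (hj : j ∈ Junif ι q) :
    Tendsto (fun h => ι h * j) (bumpFilter q) (𝓝 0) := by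
  have hnorm (f : C₀(Q, ℂ)) : ‖ι f‖ = ‖f‖ := hι.norm_map_of_map_zero (map_zero ι) f
  have hK := TwoSidedIdeal.isClosed_asymptoticAnnihilator (l := bumpFilter q) (hφ := hcentral) <|
    eventually_bumpFilter_iff.2 ⟨Set.univ, univ_mem, fun h _ hh => (hnorm h).trans_le hh⟩
  suffices hgen : {a | ∃ f : C₀(Q, ℂ), f q = 0 ∧ a = ι f} ⊆
      TwoSidedIdeal.asymptoticAnnihilator (bumpFilter q) (fun h => ι h) hcentral from
    TwoSidedIdeal.mem_asymptoticAnnihilator.1 (closedIdealGenBy_subset hK hgen hj)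
  rintro _ ⟨f, hfq, rfl⟩
  rw [SetLike.mem_coe, TwoSidedIdeal.mem_asymptoticAnnihilator,
    Metric.nhds_basis_closedBall.tendsto_right_iff]
  intro ε hε
  refine eventually_bumpFilter_iff.2 ⟨{x | ‖f x‖ < ε}, ?_, fun h hU hh => ?_⟩
  · exact (isOpen_lt (map_continuous f).norm continuous_const).mem_nhds (by simpa [hfq])
  rw [Metric.mem_closedBall, dist_zero_right, ← map_mul, hnorm, norm_le hε.le]
  intro x
  by_cases hx : h x = 0
  · simp [hx, hε.le]
  · rw [mul_apply, norm_mul]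
    exact (mul_le_of_le_one_left (norm_nonneg _) ((norm_coe_le_norm h x).trans hh)).trans
      (hU hx).le

lemma exists_apply_eq_one_mem_of_dense_sup_Junif (hι : Isometry ι)
    (hcentral : ∀ f a, ι f * a = a * ι f) {L J : TwoSidedIdeal A} (hL : IsClosed (L : Set A))
    {q : Q} (hJ : (J : Set A) = Junif ι q) (hdense : Dense ((L ⊔ J : TwoSidedIdeal A) : Set A)) :
    ∃ g : C₀(Q, ℂ), g q = 1 ∧ ι g ∈ L := by
  have hnorm (f : C₀(Q, ℂ)) : ‖ι f‖ = ‖f‖ := hι.norm_map_of_map_zero (map_zero ι) f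
  obtain ⟨f, -, hf1, -⟩ := exists_bump (Filter.univ_mem : Set.univ ∈ 𝓝 q)
  obtain ⟨y, hy, hfy⟩ := hdense.exists_dist_lt (ι f) (by norm_num : (0 : ℝ) < 1 / 2)
  obtain ⟨l, hl, j, hj, rfl⟩ := TwoSidedIdeal.mem_sup.1 hy
  obtain ⟨U, hU, hjU⟩ := eventually_bumpFilter_iff.1 <|
    (tendsto_mul_bumpFilter_of_mem_Junif hι hcentral (hJ.subset hj)).eventually
      (Metric.ball_mem_nhds 0 (by norm_num : (0 : ℝ) < 1 / 2))
  obtain ⟨h, hh, hh1, hhU⟩ := exists_bump (inter_mem hU hf1)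
  obtain ⟨g, -, hg1, hgh⟩ := exists_bump hh1
  refine ⟨g, hg1.self_of_nhds, L.mem_of_mul_eq_self_of_norm_sub_lt_one hL (b := ι h) ?_
    (L.mul_mem_left (ι h) l hl) ?_⟩
  · rw [← map_mul, mul_eq_left_of_support_subset hgh]
  have hhf : ι h * ι f = ι h := by
    rw [← map_mul, mul_eq_left_of_support_subset (hhU.trans Set.inter_subset_right)]
  calc ‖ι h - ι h * l‖ = ‖ι h * (ι f - (l + j)) + ι h * j‖ := by
        rw [mul_sub, hhf, mul_add]; abel_nf
    _ ≤ ‖ι f - (l + j)‖ + ‖ι h * j‖ := norm_add_le_of_le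
        ((norm_mul_le _ _).trans (mul_le_of_le_one_left (norm_nonneg _) ((hnorm h).trans_le hh)))
        le_rfl
    _ < 1 / 2 + 1 / 2 := add_lt_add (by rwa [← dist_eq_norm])
        (by simpa using hjU h (hhU.trans Set.inter_subset_left) hh)
    _ = 1 := by norm_num

lemma subset_Junif_of_quotientSimpleBy (hι : Isometry ι) (hcentral : ∀ f a, ι f * a = a * ι f)
    {L : TwoSidedIdeal A} (hL : IsClosed (L : Set A)) (hLι : Set.range ι ∩ L = {0}) {q : Q}
    (hq : QuotientSimpleBy (Junif ι q)) : (L : Set A) ⊆ Junif ι q := by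
  obtain ⟨J, hJ⟩ : ∃ J : TwoSidedIdeal A, (J : Set A) = Junif ι q :=
    exists_twoSidedIdeal_coe_eq_closedIdealGenBy _
  rw [← hJ] at hq ⊢
  refine (hq.subset_or_dense_sup (L := L)).resolve_right fun hdense => ?_
  obtain ⟨g, hgq, hgL⟩ := exists_apply_eq_one_mem_of_dense_sup_Junif hι hcentral hL hJ hdense
  have hg : g = 0 := hι.injective <| by simpa using hLι.subset ⟨⟨g, rfl⟩, hgL⟩
  simp [hg] at hgq

end Inclusion

theorem stmt8_general {Q : Type*} [TopologicalSpace Q] [LocallyCompactSpace Q] [T2Space Q]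
    {A : Type*} [NonUnitalCStarAlgebra A]
    (ι : C₀(Q, ℂ) →⋆ₙₐ[ℂ] A) (hisom : Isometry ι)
    (hcentral : ∀ (f : C₀(Q, ℂ)) (a : A), ι f * a = a * ι f)
    (hzero : (⋂ q ∈ {q : Q | QuotientSimpleBy (Junif ι q)}, Junif ι q) = ({0} : Set A)) :
    EssentialIncl (Set.range ι) := by
  intro L hL _ hLι
  refine Set.Subset.antisymm ?_ (by simp)
  rw [← hzero]
  exact Set.subset_iInter₂ fun q hq => subset_Junif_of_quotientSimpleBy hisom hcentral hL hLι hq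

/-- For a central non-degenerate inclusion `C₀(Q) ⊆ A`, if
`Q^unif_simple` is non-empty and `⋂_{q ∈ Q^unif_simple} J^unif_q = {0}`, then the inclusion
`C₀(Q) ⊆ A` is essential. -/
theorem stmt8 {Q : Type*} [TopologicalSpace Q] [LocallyCompactSpace Q] [T2Space Q]
    {A : Type*} [NonUnitalCStarAlgebra A]
    (ι : C₀(Q, ℂ) →⋆ₙₐ[ℂ] A) (hisom : Isometry ι)
    (hcentral : ∀ (f : C₀(Q, ℂ)) (a : A), ι f * a = a * ι f)
    (hnondeg : closure
      (Submodule.span ℂ {x : A | ∃ (f : C₀(Q, ℂ)) (a : A), x = ι f * a} : Set A) = Set.univ)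
    (hne : {q : Q | QuotientSimpleBy (Junif ι q)}.Nonempty)
    (hzero : (⋂ q ∈ {q : Q | QuotientSimpleBy (Junif ι q)}, Junif ι q) = ({0} : Set A)) :
    EssentialIncl (Set.range ι) :=
  stmt8_general ι hisom hcentral hzero
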